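/- Proposition 1 (closure of invariant functions): If F and H are smooth S-invariant functions on 𝔐 = GL(n,ℝ) × gl(n,ℝ), then the function (g,L) ↦ {F,H}_2(g,L) is again S-invariant: {F,H}_2((a,b)·(g,L)) = {F,H}_2(g,L) for all (a,b) ∈ S and (g,L) ∈ 𝔐. -/

import Mathlib

open Matrix

noncomputable section

attribute [local instance] Matrix.frobeniusNormedAddCommGroup Matrix.frobeniusNormedSpace

/-- `gl n` is the space of real `n × n` matrices. -/
abbrev gl (n : ℕ) := Matrix (Fin n) (Fin n) ℝ

variable {n : ℕ}

/-- The strictly upper triangular part `X_>`. -/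
def upPart (X : gl n) : gl n := Matrix.of fun i j => if i < j then X i j else 0

/-- The diagonal part `X_0`. -/
def diagPart (X : gl n) : gl n := Matrix.of fun i j => if i = j then X i j else 0

/-- The strictly lower triangular part `X_<`. -/
def lowPart (X : gl n) : gl n := Matrix.of fun i j => if j < i then X i j else 0

/-- The trace form `⟨X,Y⟩ = tr(XY)`. -/
def trForm (X Y : gl n) : ℝ := (X * Y).trace

/-- `R(X) = ½(X_> + X_0 − X_<) + (X_<)ᵀ`. -/
def Rop (X : gl n) : gl n := (1/2 : ℝ) • (upPart X + diagPart X - lowPart X) + (lowPart X)ᵀ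

/-- `R_a(X) = ½(X_> − X_<)`, the anti-symmetric part of `R`. -/
def Ra (X : gl n) : gl n := (1/2 : ℝ) • (upPart X - lowPart X)

/-- `R_s(X) = ½X_0 + (X_<)ᵀ`, the symmetric part of `R`. -/
def Rs (X : gl n) : gl n := (1/2 : ℝ) • diagPart X + (lowPart X)ᵀ

/-- `r₊ = R_a + ½·id`. -/
def rPlus (X : gl n) : gl n := Ra X + (1/2 : ℝ) • X

/-- `r₋ = R_a − ½·id`. -/
def rMinus (X : gl n) : gl n := Ra X - (1/2 : ℝ) • X

/-- The skew-symmetric part `Z⁺ = ½(Z − Zᵀ)`. -/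
def skewPart (X : gl n) : gl n := (1/2 : ℝ) • (X - Xᵀ)

/-- The symmetric part `Z⁻ = ½(Z + Zᵀ)`. -/
def symPart (X : gl n) : gl n := (1/2 : ℝ) • (X + Xᵀ)

/-- `df` is the gradient of `f` with respect to the trace form:
`tr(df(L)·Y)` is the derivative of `f` at `L` in direction `Y`. -/
def IsGradient (f : gl n → ℝ) (df : gl n → gl n) : Prop :=
  ∀ L Y : gl n, HasDerivAt (fun t : ℝ => f (L + t • Y)) (trForm (df L) Y) 0

/-- `f : gl(n,ℝ) → ℝ` is smooth. -/
def SmoothG (f : gl n → ℝ) : Prop := ContDiff ℝ (⊤ : ℕ∞) f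

/-- The quadratic r-matrix bracket `{f,h}₂(L)`, expressed via the gradient
functions `df`, `dh` of `f` and `h`:
`⟨∇f, R_a∇h⟩ − ⟨∇'f, R_a∇'h⟩ + ⟨∇f, R_s∇'h⟩ − ⟨∇'f, R_s∇h⟩`
with `∇f = L·df(L)` and `∇'f = df(L)·L`. -/
def quadBr (df dh : gl n → gl n) (L : gl n) : ℝ :=
  trForm (L * df L) (Ra (L * dh L)) - trForm (df L * L) (Ra (dh L * L))
    + trForm (L * df L) (Rs (dh L * L)) - trForm (df L * L) (Rs (L * dh L))

/-- The linear r-matrix bracket `{f,h}₁(L) = ⟨L, [R df(L), dh(L)] + [df(L), R dh(L)]⟩`. -/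
def linBr (df dh : gl n → gl n) (L : gl n) : ℝ :=
  trForm L (⁅Rop (df L), dh L⁆ + ⁅df L, Rop (dh L)⁆)

/-- The Toda Hamiltonians `h_k(L) = (1/k)·tr(L^k)`. -/
def hamH (k : ℕ) (L : gl n) : ℝ := (1 / (k : ℝ)) * (L ^ k).trace

/-- `a` is an orthogonal matrix. -/
def IsOrth (a : gl n) : Prop := aᵀ * a = 1

/-- `b` belongs to `B`: upper triangular with strictly positive diagonal entries. -/
def InB (b : gl n) : Prop := b.BlockTriangular id ∧ ∀ i, 0 < b i i

/-- `F : 𝔐 → ℝ` is invariant under the action `(g,L) ↦ (a g b⁻¹, a L a⁻¹)`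
of `S = O(n,ℝ) × B` on `𝔐 = GL(n,ℝ) × gl(n,ℝ)`. -/
def SInvariant (F : gl n × gl n → ℝ) : Prop :=
  ∀ a b g L : gl n, IsOrth a → InB b → IsUnit g.det →
    F (a * g * b⁻¹, a * L * a⁻¹) = F (g, L)

/-- `F` is smooth on `𝔐 = GL(n,ℝ) × gl(n,ℝ)`. -/
def SmoothOnM (F : gl n × gl n → ℝ) : Prop :=
  ContDiffOn ℝ (⊤ : ℕ∞) F {p : gl n × gl n | IsUnit p.1.det}

/-- `N` is the left derivative `∇₁F`:
`⟨∇₁F(g,L), X⟩ = d/dt|₀ F(e^{tX} g, L)` for all `X`. -/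
def IsGrad1 (F : gl n × gl n → ℝ) (N : gl n × gl n → gl n) : Prop :=
  ∀ g L : gl n, IsUnit g.det → ∀ X : gl n,
    HasDerivAt (fun t : ℝ => F (NormedSpace.exp (t • X) * g, L)) (trForm (N (g, L)) X) 0

/-- `N` is the right derivative `∇₁'F`:
`⟨∇₁'F(g,L), X⟩ = d/dt|₀ F(g e^{tX}, L)` for all `X`. -/
def IsGrad1' (F : gl n × gl n → ℝ) (N : gl n × gl n → gl n) : Prop :=
  ∀ g L : gl n, IsUnit g.det → ∀ X : gl n,
    HasDerivAt (fun t : ℝ => F (g * NormedSpace.exp (t • X), L)) (trForm (N (g, L)) X) 0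

/-- `D` is the gradient `d₂F` of `F` in the second argument. -/
def IsGrad2 (F : gl n × gl n → ℝ) (D : gl n × gl n → gl n) : Prop :=
  ∀ g L : gl n, IsUnit g.det → ∀ Y : gl n,
    HasDerivAt (fun t : ℝ => F (g, L + t • Y)) (trForm (D (g, L)) Y) 0

/-- The quadratic bracket `{F,H}₂(g,L)` on `𝔐`, expressed through the derivative data
`nf = ∇₁F(g,L)`, `nf' = ∇₁'F(g,L)`, `d2f = d₂F(g,L)` and likewise for `H`:
`⟨R_a∇₁F, ∇₁H⟩ − ⟨R_a∇₁'F, ∇₁'H⟩ + ⟨∇₂F − ∇₂'F, r₊∇₂'H − r₋∇₂H⟩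
 + ⟨∇₁F, r₊∇₂'H − r₋∇₂H⟩ − ⟨∇₁H, r₊∇₂'F − r₋∇₂F⟩`. -/
def pb2 (nf nf' d2f nh nh' d2h L : gl n) : ℝ :=
  trForm (Ra nf) nh - trForm (Ra nf') nh'
    + trForm (L * d2f - d2f * L) (rPlus (d2h * L) - rMinus (L * d2h))
    + trForm nf (rPlus (d2h * L) - rMinus (L * d2h))
    - trForm nh (rPlus (d2f * L) - rMinus (L * d2f))

/-- The canonical bracket `{F,H}₁(g,L)` on `𝔐`, expressed through the derivative data:
`⟨∇₁F, d₂H⟩ − ⟨∇₁H, d₂F⟩ + ⟨L, [d₂F, d₂H]⟩`. -/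
def pb1 (nf d2f nh d2h L : gl n) : ℝ :=
  trForm nf d2h - trForm nh d2f + trForm L ⁅d2f, d2h⁆

/-! ### Auxiliary algebraic lemmas -/

section Aux

variable {n : ℕ}

lemma trForm_def (X Y : gl n) : trForm X Y = ∑ i, ∑ j, X i j * Y j i := by
  simp [trForm, Matrix.trace, Matrix.diag, Matrix.mul_apply]

lemma trForm_comm (X Y : gl n) : trForm X Y = trForm Y X := Matrix.trace_mul_comm X Y

lemma trForm_add_left (X Y Z : gl n) : trForm (X + Y) Z = trForm X Z + trForm Y Z := by
  simp [trForm, Matrix.add_mul]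

lemma trForm_add_right (X Y Z : gl n) : trForm X (Y + Z) = trForm X Y + trForm X Z := by
  simp [trForm, Matrix.mul_add]

lemma trForm_sub_left (X Y Z : gl n) : trForm (X - Y) Z = trForm X Z - trForm Y Z := by
  simp [trForm, Matrix.sub_mul]

lemma trForm_sub_right (X Y Z : gl n) : trForm X (Y - Z) = trForm X Y - trForm X Z := by
  simp [trForm, Matrix.mul_sub]

lemma trForm_neg_right (X Y : gl n) : trForm X (-Y) = - trForm X Y := by
  simp [trForm]

lemma trForm_smul_left (c : ℝ) (X Y : gl n) : trForm (c • X) Y = c * trForm X Y := by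
  simp [trForm, Matrix.smul_mul]

lemma trForm_smul_right (c : ℝ) (X Y : gl n) : trForm X (c • Y) = c * trForm X Y := by
  simp [trForm, Matrix.mul_smul]

lemma trForm_upPart (X Y : gl n) : trForm (upPart X) Y = trForm X (lowPart Y) := by
  rw [trForm_def, trForm_def]
  refine Finset.sum_congr rfl fun i _ => Finset.sum_congr rfl fun j _ => ?_
  simp only [upPart, lowPart, Matrix.of_apply]
  split_ifs <;> ring

lemma trForm_lowPart (X Y : gl n) : trForm (lowPart X) Y = trForm X (upPart Y) := by
  rw [trForm_def, trForm_def]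
  refine Finset.sum_congr rfl fun i _ => Finset.sum_congr rfl fun j _ => ?_
  simp only [upPart, lowPart, Matrix.of_apply]
  split_ifs <;> ring

lemma trForm_Ra (X Y : gl n) : trForm (Ra X) Y = - trForm X (Ra Y) := by
  simp only [Ra, trForm_smul_left, trForm_smul_right, trForm_sub_left, trForm_sub_right,
    trForm_upPart, trForm_lowPart]
  ring

lemma Ra_apply (X : gl n) (i j : Fin n) :
    Ra X i j = (1/2 : ℝ) * ((if i < j then X i j else 0) - (if j < i then X i j else 0)) := by
  simp [Ra, upPart, lowPart]

lemma Ra_add (X Y : gl n) : Ra (X + Y) = Ra X + Ra Y := by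
  ext i j
  simp only [Ra_apply, Matrix.add_apply]
  split_ifs <;> ring

lemma Ra_sub (X Y : gl n) : Ra (X - Y) = Ra X - Ra Y := by
  ext i j
  simp only [Ra_apply, Matrix.sub_apply]
  split_ifs <;> ring

lemma transpose_Ra (X : gl n) : (Ra X)ᵀ = - Ra Xᵀ := by
  ext i j
  simp only [Matrix.transpose_apply, Ra_apply, Matrix.neg_apply]
  ring

lemma trForm_symm_skew {S K : gl n} (hS : Sᵀ = S) (hK : Kᵀ = -K) : trForm S K = 0 := by
  have h1 : trForm S K = trForm Kᵀ Sᵀ := by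
    unfold trForm
    rw [← Matrix.trace_transpose, Matrix.transpose_mul]
  rw [hS, hK] at h1
  have h2 : trForm (-K) S = - trForm S K := by
    rw [trForm_comm S K]
    simp [trForm, Matrix.neg_mul]
  linarith

lemma trForm_symm_Ra_symm {S T : gl n} (hS : Sᵀ = S) (hT : Tᵀ = T) : trForm S (Ra T) = 0 :=
  trForm_symm_skew hS (by rw [transpose_Ra, hT])

/-- strictly upper triangular -/
def SU (X : gl n) : Prop := ∀ i j : Fin n, j ≤ i → X i j = 0

lemma Ra_of_SU {X : gl n} (hX : SU X) : Ra X = (1/2 : ℝ) • X := by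
  ext i j
  rcases lt_or_ge i j with h | h
  · simp [Ra_apply, h, not_lt.2 h.le]
  · simp [Ra_apply, not_lt.2 h, hX i j h]

lemma trForm_SU_SU {X Y : gl n} (hX : SU X) (hY : SU Y) : trForm X Y = 0 := by
  rw [trForm_def]
  refine Finset.sum_eq_zero fun i _ => Finset.sum_eq_zero fun j _ => ?_
  rcases le_or_gt j i with h | h
  · rw [hX i j h, zero_mul]
  · rw [hY j i h.le, mul_zero]

lemma trForm_self_transpose_eq_zero {A : gl n} (h : trForm A Aᵀ = 0) : A = 0 := by
  have h2 : ∑ i, ∑ j, (A i j) ^ 2 = 0 := by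
    rw [← h, trForm_def]
    refine Finset.sum_congr rfl fun i _ => Finset.sum_congr rfl fun j _ => ?_
    rw [Matrix.transpose_apply, sq]
  ext i j
  have h3 := (Finset.sum_eq_zero_iff_of_nonneg
    (fun i _ => Finset.sum_nonneg fun j _ => sq_nonneg (A i j))).mp h2 i (Finset.mem_univ i)
  have h4 := (Finset.sum_eq_zero_iff_of_nonneg
    (fun j _ => sq_nonneg (A i j))).mp h3 j (Finset.mem_univ j)
  simpa using sq_eq_zero_iff.mp h4

lemma trForm_stdBasis (N : gl n) (k l : Fin n) :
    trForm N (Matrix.single k l 1) = N l k := by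
  rw [trForm_def]
  rw [Finset.sum_eq_single l]
  · rw [Finset.sum_eq_single k]
    · simp [Matrix.single]
    · intro m _ hm
      simp [Matrix.single, Ne.symm hm]
    · intro h; exact absurd (Finset.mem_univ k) h
  · intro p _ hp
    refine Finset.sum_eq_zero fun q _ => ?_
    simp [Matrix.single, Ne.symm hp]
  · intro h; exact absurd (Finset.mem_univ l) h

lemma trForm_ext {M N : gl n} (h : ∀ X, trForm M X = trForm N X) : M = N := by
  have h0 : trForm (M - N) (M - N)ᵀ = 0 := by
    rw [trForm_sub_left, h ((M - N)ᵀ)]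
    ring
  exact sub_eq_zero.mp (trForm_self_transpose_eq_zero h0)

lemma symm_of_skew_pairing {M : gl n} (h : ∀ X : gl n, Xᵀ = -X → trForm M X = 0) :
    Mᵀ = M := by
  set K := M - Mᵀ with hKdef
  have hK : Kᵀ = -K := by
    simp only [hKdef, Matrix.transpose_sub, Matrix.transpose_transpose, neg_sub]
  have h1 : trForm M K = 0 := h K hK
  have h2 : trForm Mᵀ K = 0 := by
    have e1 : trForm Mᵀ K = trForm Kᵀ M := by
      unfold trForm
      rw [← Matrix.trace_transpose (Mᵀ * K), Matrix.transpose_mul, Matrix.transpose_transpose]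
    rw [hK] at e1
    have e2 : trForm (-K) M = - trForm M K := by
      rw [trForm_comm M K]; simp [trForm, Matrix.neg_mul]
    rw [e1, e2, h1, neg_zero]
  have h3 : trForm K Kᵀ = 0 := by
    rw [hK, trForm_neg_right]
    have : trForm K K = 0 := by
      rw [hKdef, trForm_sub_left, h1, h2, sub_zero]
    rw [this, neg_zero]
  have := trForm_self_transpose_eq_zero h3
  have hMK : M - Mᵀ = 0 := this
  have := sub_eq_zero.mp hMK
  exact this.symm

lemma pb2_eq (f f' φ h h' ψ L : gl n)
    (hMf : (f + (L * φ - φ * L))ᵀ = f + (L * φ - φ * L))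
    (hMh : (h + (L * ψ - ψ * L))ᵀ = h + (L * ψ - ψ * L))
    (hf' : SU f') (hh' : SU h') :
    pb2 f f' φ h h' ψ L =
      (1/2 : ℝ) * trForm (f + (L * φ - φ * L)) (L * ψ + ψ * L)
        - (1/2 : ℝ) * trForm h (L * φ + φ * L) := by
  have key : ∀ u v : gl n, rPlus u - rMinus v = (Ra u - Ra v) + (1/2 : ℝ) • (u + v) := by
    intro u v
    simp only [rPlus, rMinus, smul_add]
    abel
  have hterm2 : trForm (Ra f') h' = 0 := by
    rw [Ra_of_SU hf', trForm_smul_left, trForm_SU_SU hf' hh', mul_zero]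
  set P := L * φ - φ * L with hP
  set Q := L * ψ - ψ * L with hQ
  have hRaQ : Ra (ψ * L) - Ra (L * ψ) = - Ra Q := by
    rw [hQ, Ra_sub]; abel
  have hRaP : Ra (φ * L) - Ra (L * φ) = - Ra P := by
    rw [hP, Ra_sub]; abel
  have e1 : trForm f (Ra Q) + trForm P (Ra Q) = -(trForm f (Ra h) + trForm P (Ra h)) := by
    have h0 : trForm (f + P) (Ra (h + Q)) = 0 := trForm_symm_Ra_symm hMf hMh
    rw [Ra_add, trForm_add_left, trForm_add_right, trForm_add_right] at h0
    linarith
  have e2 : trForm h (Ra f) + trForm f (Ra h) = 0 := by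
    have a1 := trForm_Ra f h
    have a2 := trForm_comm h (Ra f)
    linarith
  have e3 : trForm h (Ra P) + trForm P (Ra h) = 0 := by
    have a1 := trForm_Ra P h
    have a2 := trForm_comm h (Ra P)
    linarith
  have e4 : trForm (Ra f) h = trForm h (Ra f) := trForm_comm (Ra f) h
  unfold pb2
  rw [key, key, hRaQ, hRaP, hterm2]
  simp only [trForm_add_right, trForm_neg_right, trForm_smul_right, trForm_add_left]
  linarith

section Analytic

attribute [local instance] Matrix.frobeniusNormedRing Matrix.frobeniusNormedAlgebra

variable {n : ℕ}

instance : CompleteSpace (gl n) := FiniteDimensional.complete ℝ _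

/-- The entry functional as a continuous linear map. -/
def entryCLM (i j : Fin n) : gl n →L[ℝ] ℝ :=
  LinearMap.toContinuousLinearMap
    { toFun := fun M => M i j
      map_add' := fun _ _ => rfl
      map_smul' := fun _ _ => rfl }

lemma entryCLM_apply (i j : Fin n) (M : gl n) : entryCLM i j M = M i j := rfl

lemma exp_entry (X : gl n) (i j : Fin n) :
    NormedSpace.exp X i j = ∑' k : ℕ, ((k.factorial : ℝ)⁻¹) * (X ^ k) i j := by
  have hs : Summable fun k : ℕ => ((k.factorial : ℝ)⁻¹) • X ^ k :=
    NormedSpace.expSeries_summable' (𝕂 := ℝ) X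
  calc NormedSpace.exp X i j
      = entryCLM i j (∑' k : ℕ, ((k.factorial : ℝ)⁻¹) • X ^ k) := by
        rw [NormedSpace.exp_eq_tsum (𝕂 := ℝ)]
        rfl
    _ = ∑' k : ℕ, entryCLM i j (((k.factorial : ℝ)⁻¹) • X ^ k) :=
        (entryCLM i j).map_tsum hs
    _ = ∑' k : ℕ, ((k.factorial : ℝ)⁻¹) * (X ^ k) i j := by
        refine tsum_congr fun k => ?_
        rw [_root_.map_smul, entryCLM_apply, smul_eq_mul]

lemma BT_pow {X : gl n} (hX : X.BlockTriangular id) (k : ℕ) :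
    (X ^ k).BlockTriangular id := by
  induction k with
  | zero => simpa [pow_zero] using (Matrix.blockTriangular_one (R := ℝ))
  | succ k ih => rw [pow_succ]; exact ih.mul hX

lemma diag_pow {X : gl n} (hX : X.BlockTriangular id) (k : ℕ) (i : Fin n) :
    (X ^ k) i i = (X i i) ^ k := by
  induction k with
  | zero => simp [Matrix.one_apply]
  | succ k ih =>
    rw [pow_succ, Matrix.mul_apply, Finset.sum_eq_single i]
    · rw [ih, pow_succ]
    · intro m _ hm
      rcases lt_or_gt_of_ne hm with h | h
      · rw [BT_pow hX k (show id m < id i from h), zero_mul]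
      · rw [hX (show id i < id m from h), mul_zero]
    · intro h; exact absurd (Finset.mem_univ i) h

lemma exp_BT {X : gl n} (hX : X.BlockTriangular id) :
    (NormedSpace.exp X).BlockTriangular id := by
  intro i j hij
  rw [exp_entry]
  have h0 : (fun k : ℕ => ((k.factorial : ℝ)⁻¹) * (X ^ k) i j) = fun _ => 0 := by
    funext k; rw [BT_pow hX k hij, mul_zero]
  rw [h0, tsum_zero]

lemma exp_diag_pos {X : gl n} (hX : X.BlockTriangular id) (i : Fin n) :
    0 < NormedSpace.exp X i i := by
  have h1 : NormedSpace.exp X i i = NormedSpace.exp (X i i) := by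
    rw [exp_entry, NormedSpace.exp_eq_tsum (𝕂 := ℝ)]
    exact tsum_congr fun k => by rw [diag_pow hX k i, smul_eq_mul]
  rw [h1, ← Real.exp_eq_exp_ℝ]
  exact Real.exp_pos _

lemma exp_InB {X : gl n} (hX : X.BlockTriangular id) : InB (NormedSpace.exp X) :=
  ⟨exp_BT hX, exp_diag_pos hX⟩

lemma BT_smul (c : ℝ) {X : gl n} (hX : X.BlockTriangular id) :
    (c • X).BlockTriangular id :=
  fun _ _ hij => by rw [Matrix.smul_apply, hX hij, smul_zero]

lemma isOrth_one : IsOrth (1 : gl n) := by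
  simp [IsOrth]

lemma exp_isOrth {X : gl n} (hX : Xᵀ = -X) (t : ℝ) :
    IsOrth (NormedSpace.exp (t • X)) := by
  unfold IsOrth
  rw [← Matrix.exp_transpose]
  have h1 : (t • X)ᵀ = -(t • X) := by rw [Matrix.transpose_smul, hX, smul_neg]
  rw [h1, ← Matrix.exp_add_of_commute (-(t • X)) (t • X) ((Commute.refl (t • X)).neg_left)]
  simp [NormedSpace.exp_zero]

lemma exp_inv_eq (X : gl n) : (NormedSpace.exp X)⁻¹ = NormedSpace.exp (-X) := by
  refine Matrix.inv_eq_right_inv ?_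
  rw [← Matrix.exp_add_of_commute X (-X) ((Commute.refl X).neg_right)]
  simp [NormedSpace.exp_zero]

lemma hasDerivAt_expc (X : gl n) :
    HasDerivAt (fun t : ℝ => NormedSpace.exp (t • X)) X 0 := by
  have h := hasDerivAt_exp_smul_const (𝕂 := ℝ) X (0 : ℝ)
  simp only [zero_smul, NormedSpace.exp_zero, one_mul] at h
  exact h

lemma isOpen_M : IsOpen {p : gl n × gl n | IsUnit p.1.det} := by
  have h1 : Continuous fun M : gl n => M.det := by
    have hrw : (fun M : gl n => M.det) = fun M : gl n =>
        ∑ σ : Equiv.Perm (Fin n), ((Equiv.Perm.sign σ : ℤ) : ℝ) * ∏ i, M (σ i) i := by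
      funext M
      rw [Matrix.det_apply]
      exact Finset.sum_congr rfl fun σ _ => by rw [Units.smul_def, zsmul_eq_mul]
    rw [hrw]
    exact continuous_finset_sum _ fun σ _ => continuous_const.mul
      (continuous_finset_prod _ fun i _ => (entryCLM (σ i) i).continuous)
  have hc : Continuous fun p : gl n × gl n => p.1.det := h1.comp continuous_fst
  have hset : {p : gl n × gl n | IsUnit p.1.det}
      = (fun p : gl n × gl n => p.1.det) ⁻¹' ({0}ᶜ) := by
    ext p; simp [isUnit_iff_ne_zero]
  rw [hset]
  exact isOpen_compl_singleton.preimage hc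

lemma grad_via_fderiv {F : gl n × gl n → ℝ} (hF : SmoothOnM F)
    {g L : gl n} (hg : IsUnit g.det) :
    ∃ Φ : gl n × gl n →L[ℝ] ℝ, HasFDerivAt F Φ (g, L) := by
  have hd : DifferentiableAt ℝ F (g, L) :=
    (hF.differentiableOn (by simp)).differentiableAt (isOpen_M.mem_nhds hg)
  exact ⟨fderiv ℝ F (g, L), hd.hasFDerivAt⟩

lemma C1 {F : gl n × gl n → ℝ} (hF : SmoothOnM F) (hFinv : SInvariant F)
    {NF DF : gl n × gl n → gl n} (hNF : IsGrad1 F NF) (hDF : IsGrad2 F DF)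
    {g L : gl n} (hg : IsUnit g.det) :
    (NF (g, L) + (L * DF (g, L) - DF (g, L) * L))ᵀ
      = NF (g, L) + (L * DF (g, L) - DF (g, L) * L) := by
  obtain ⟨Φ, hΦ⟩ := grad_via_fderiv hF hg
  have key1 : ∀ X : gl n, trForm (NF (g, L)) X = Φ (X * g, 0) := by
    intro X
    have hcurve : HasDerivAt (fun t : ℝ => ((NormedSpace.exp (t • X) * g : gl n), L))
        ((X * g, 0) : gl n × gl n) 0 :=
      ((hasDerivAt_expc X).mul_const g).prodMk (hasDerivAt_const (0 : ℝ) L)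
    have hΦ1 : HasFDerivAt F Φ ((NormedSpace.exp ((0 : ℝ) • X) * g : gl n), L) := by
      simpa [NormedSpace.exp_zero] using hΦ
    exact (hNF g L hg X).unique (hΦ1.comp_hasDerivAt 0 hcurve)
  have key2 : ∀ Y : gl n, trForm (DF (g, L)) Y = Φ (0, Y) := by
    intro Y
    have hsnd : HasDerivAt (fun t : ℝ => L + t • Y) Y 0 := by
      have := ((hasDerivAt_id (0 : ℝ)).smul_const Y).const_add L
      simp only [id, one_smul] at this
      exact this
    have hcurve : HasDerivAt (fun t : ℝ => ((g : gl n), L + t • Y))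
        ((0, Y) : gl n × gl n) 0 := (hasDerivAt_const (0 : ℝ) g).prodMk hsnd
    have hΦ1 : HasFDerivAt F Φ ((g : gl n), L + (0 : ℝ) • Y) := by
      simpa using hΦ
    exact (hDF g L hg Y).unique (hΦ1.comp_hasDerivAt 0 hcurve)
  have hzero : ∀ X : gl n, Xᵀ = -X → Φ (X * g, X * L - L * X) = 0 := by
    intro X hX
    have hcurve : HasDerivAt (fun t : ℝ => ((NormedSpace.exp (t • X) * g : gl n),
        NormedSpace.exp (t • X) * L * NormedSpace.exp (t • (-X))))
        ((X * g, X * L - L * X) : gl n × gl n) 0 := by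
      have h1 := (hasDerivAt_expc X).mul_const g
      have h2 : HasDerivAt (fun t : ℝ =>
          NormedSpace.exp (t • X) * L * NormedSpace.exp (t • (-X)))
          (X * L - L * X) 0 := by
        have := ((hasDerivAt_expc X).mul_const L).mul (hasDerivAt_expc (-X))
        simp [NormedSpace.exp_zero, mul_neg, sub_eq_add_neg] at this ⊢
        exact this
      exact h1.prodMk h2
    have hd' : HasDerivAt (fun t : ℝ => F ((NormedSpace.exp (t • X) * g : gl n),
        NormedSpace.exp (t • X) * L * NormedSpace.exp (t • (-X))))
        (Φ ((X * g, X * L - L * X) : gl n × gl n)) 0 := by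
      have hΦ1 : HasFDerivAt F Φ ((NormedSpace.exp ((0 : ℝ) • X) * g : gl n),
          NormedSpace.exp ((0 : ℝ) • X) * L * NormedSpace.exp ((0 : ℝ) • (-X))) := by
        simpa [NormedSpace.exp_zero] using hΦ
      exact hΦ1.comp_hasDerivAt 0 hcurve
    have hconst : (fun t : ℝ => F ((NormedSpace.exp (t • X) * g : gl n),
        NormedSpace.exp (t • X) * L * NormedSpace.exp (t • (-X))))
        = fun _ => F (g, L) := by
      funext t
      have horth : IsOrth (NormedSpace.exp (t • X)) := exp_isOrth hX t
      have hinv : (NormedSpace.exp (t • X))⁻¹ = NormedSpace.exp (t • (-X)) := by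
        rw [exp_inv_eq, smul_neg]
      have h3 := hFinv (NormedSpace.exp (t • X)) 1 g L horth
        ⟨Matrix.blockTriangular_one, fun i => by rw [Matrix.one_apply_eq]; exact zero_lt_one⟩ hg
      rw [inv_one, mul_one, hinv] at h3
      exact h3
    rw [hconst] at hd'
    exact hd'.unique (hasDerivAt_const 0 _)
  apply symm_of_skew_pairing
  intro X hX
  have h0 := hzero X hX
  have hsplit : ((X * g, X * L - L * X) : gl n × gl n)
      = ((X * g, 0) : gl n × gl n) + ((0, X * L - L * X) : gl n × gl n) := by
    simp [Prod.ext_iff]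
  rw [hsplit, map_add] at h0
  have e3 : trForm (DF (g, L)) (X * L - L * X)
      = trForm (L * DF (g, L) - DF (g, L) * L) X := by
    have c1 : (DF (g, L) * (X * L)).trace = (L * DF (g, L) * X).trace := by
      rw [← Matrix.mul_assoc, Matrix.trace_mul_comm, ← Matrix.mul_assoc]
    have c2 : (DF (g, L) * (L * X)).trace = (DF (g, L) * L * X).trace := by
      rw [← Matrix.mul_assoc]
    simp only [trForm, Matrix.mul_sub, Matrix.sub_mul, Matrix.trace_sub, c1, c2]
  rw [trForm_add_left, key1 X, ← e3, key2 (X * L - L * X)]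
  exact h0

lemma C2 {F : gl n × gl n → ℝ} (hFinv : SInvariant F)
    {NF' : gl n × gl n → gl n} (hNF' : IsGrad1' F NF')
    {g L : gl n} (hg : IsUnit g.det) : SU (NF' (g, L)) := by
  have hzero : ∀ X : gl n, X.BlockTriangular id → trForm (NF' (g, L)) X = 0 := by
    intro X hX
    have hconst : (fun t : ℝ => F (g * NormedSpace.exp (t • X), L)) = fun _ => F (g, L) := by
      funext t
      have hb : InB (NormedSpace.exp ((-t) • X)) := exp_InB (BT_smul (-t) hX)
      have hbinv : (NormedSpace.exp ((-t) • X))⁻¹ = NormedSpace.exp (t • X) := by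
        rw [exp_inv_eq, ← neg_smul, neg_neg]
      have h3 := hFinv 1 (NormedSpace.exp ((-t) • X)) g L isOrth_one hb hg
      rw [hbinv, inv_one, one_mul, one_mul, mul_one] at h3
      exact h3
    have hd := hNF' g L hg X
    rw [hconst] at hd
    exact hd.unique (hasDerivAt_const 0 _)
  intro i j hji
  have hbt : (Matrix.single j i (1 : ℝ)).BlockTriangular id :=
    Matrix.blockTriangular_single (show (id j : Fin n) ≤ id i from hji) 1
  have h := hzero (Matrix.single j i 1) hbt
  rw [trForm_stdBasis] at h
  exact h

lemma detUnit_conj {a b g : gl n} (ha : IsOrth a) (hb : InB b) (hg : IsUnit g.det) :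
    IsUnit (a * g * b⁻¹).det := by
  have hadet : IsUnit a.det := by
    have h1 : a.det * a.det = 1 := by
      have h2 := congrArg Matrix.det ha
      rwa [Matrix.det_mul, Matrix.det_transpose, Matrix.det_one] at h2
    exact IsUnit.of_mul_eq_one_right _ h1
  have hbdet : IsUnit b.det := by
    rw [Matrix.det_of_upperTriangular hb.1]
    exact (Finset.prod_pos fun i _ => hb.2 i).ne'.isUnit
  have hbinv : IsUnit (b⁻¹).det := Matrix.isUnit_nonsing_inv_det b hbdet
  rw [Matrix.det_mul, Matrix.det_mul]
  exact (hadet.mul hg).mul hbinv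

lemma trForm_conj (N X A : gl n) :
    trForm N (Aᵀ * X * A) = trForm (A * N * Aᵀ) X := by
  unfold trForm
  have e1 : N * (Aᵀ * X * A) = N * Aᵀ * X * A := by noncomm_ring
  have e2 : A * (N * Aᵀ * X) = A * N * Aᵀ * X := by noncomm_ring
  rw [e1, Matrix.trace_mul_comm, e2]

lemma expg_detUnit {g : gl n} (hg : IsUnit g.det) (A : gl n) :
    IsUnit (NormedSpace.exp A * g).det := by
  rw [Matrix.det_mul]
  exact ((Matrix.isUnit_iff_isUnit_det _).mp (Matrix.isUnit_exp A)).mul hg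

lemma T1 {F : gl n × gl n → ℝ} (hFinv : SInvariant F)
    {NF : gl n × gl n → gl n} (hNF : IsGrad1 F NF)
    {a b g L : gl n} (ha : IsOrth a) (hb : InB b) (hg : IsUnit g.det) :
    NF (a * g * b⁻¹, a * L * a⁻¹) = a * NF (g, L) * aᵀ := by
  have haa : a * aᵀ = 1 := mul_eq_one_comm.mp ha
  have hAunit : IsUnit (aᵀ : gl n) :=
    (Matrix.isUnit_iff_isUnit_det _).mpr (by
      rw [Matrix.det_transpose]
      have h1 : a.det * a.det = 1 := by
        have h2 := congrArg Matrix.det ha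
        rwa [Matrix.det_mul, Matrix.det_transpose, Matrix.det_one] at h2
      exact IsUnit.of_mul_eq_one_right _ h1)
  have hg' : IsUnit (a * g * b⁻¹).det := detUnit_conj ha hb hg
  apply trForm_ext
  intro X
  have hconj : ∀ t : ℝ, NormedSpace.exp (t • (aᵀ * X * a))
      = aᵀ * NormedSpace.exp (t • X) * a := by
    intro t
    have h1 : t • (aᵀ * X * a) = aᵀ * (t • X) * a := by
      rw [mul_smul_comm, smul_mul_assoc]
    rw [h1]
    calc NormedSpace.exp (aᵀ * (t • X) * a)
        = NormedSpace.exp (aᵀ * (t • X) * aᵀ⁻¹) := by rw [Matrix.inv_eq_right_inv ha]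
      _ = aᵀ * NormedSpace.exp (t • X) * aᵀ⁻¹ := Matrix.exp_conj _ _ hAunit
      _ = aᵀ * NormedSpace.exp (t • X) * a := by rw [Matrix.inv_eq_right_inv ha]
  have hfun : (fun t : ℝ => F (NormedSpace.exp (t • X) * (a * g * b⁻¹), a * L * a⁻¹))
      = fun t : ℝ => F (NormedSpace.exp (t • (aᵀ * X * a)) * g, L) := by
    funext t
    have h3 : NormedSpace.exp (t • X) * (a * g * b⁻¹)
        = a * (NormedSpace.exp (t • (aᵀ * X * a)) * g) * b⁻¹ := by
      rw [hconj]
      simp only [← mul_assoc]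
      rw [haa, one_mul]
    rw [h3]
    exact hFinv a b _ L ha hb (expg_detUnit hg _)
  have hd1 := hNF (a * g * b⁻¹) (a * L * a⁻¹) hg' X
  rw [hfun] at hd1
  have hu := (hNF g L hg (aᵀ * X * a)).unique hd1
  rw [← hu]
  exact trForm_conj (NF (g, L)) X a

lemma T2 {F : gl n × gl n → ℝ} (hFinv : SInvariant F)
    {DF : gl n × gl n → gl n} (hDF : IsGrad2 F DF)
    {a b g L : gl n} (ha : IsOrth a) (hb : InB b) (hg : IsUnit g.det) :
    DF (a * g * b⁻¹, a * L * a⁻¹) = a * DF (g, L) * aᵀ := by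
  have haa : a * aᵀ = 1 := mul_eq_one_comm.mp ha
  have hainv : a⁻¹ = aᵀ := Matrix.inv_eq_left_inv ha
  have hg' : IsUnit (a * g * b⁻¹).det := detUnit_conj ha hb hg
  apply trForm_ext
  intro Y
  have ky : ∀ t : ℝ, a * L * a⁻¹ + t • Y = a * (L + t • (aᵀ * Y * a)) * a⁻¹ := by
    intro t
    rw [hainv, Matrix.mul_add, Matrix.add_mul]
    congr 1
    rw [mul_smul_comm, smul_mul_assoc]
    rw [show a * (aᵀ * Y * a) * aᵀ = (a * aᵀ) * Y * (a * aᵀ) from by noncomm_ring, haa,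
      one_mul, mul_one]
  have hfun : (fun t : ℝ => F (a * g * b⁻¹, a * L * a⁻¹ + t • Y))
      = fun t : ℝ => F (g, L + t • (aᵀ * Y * a)) := by
    funext t
    rw [ky t]
    exact hFinv a b g _ ha hb hg
  have hd1 := hDF (a * g * b⁻¹) (a * L * a⁻¹) hg' Y
  rw [hfun] at hd1
  have hu := (hDF g L hg (aᵀ * Y * a)).unique hd1
  rw [← hu]
  exact trForm_conj (DF (g, L)) Y a

end Analytic

end Aux

/-- Proposition 1, closure: for `S`-invariant `F, H`, the function
`(g,L) ↦ {F,H}₂(g,L)` is again `S`-invariant. -/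
theorem stmt15 (n : ℕ) (F H : gl n × gl n → ℝ)
    (hF : SmoothOnM F) (hH : SmoothOnM H)
    (hFinv : SInvariant F) (hHinv : SInvariant H)
    (NF NF' DF NH NH' DH : gl n × gl n → gl n)
    (hNF : IsGrad1 F NF) (hNF' : IsGrad1' F NF') (hDF : IsGrad2 F DF)
    (hNH : IsGrad1 H NH) (hNH' : IsGrad1' H NH') (hDH : IsGrad2 H DH)
    (a b g L : gl n) (ha : IsOrth a) (hb : InB b) (hg : IsUnit g.det) :
    pb2 (NF (a * g * b⁻¹, a * L * a⁻¹)) (NF' (a * g * b⁻¹, a * L * a⁻¹))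
        (DF (a * g * b⁻¹, a * L * a⁻¹)) (NH (a * g * b⁻¹, a * L * a⁻¹))
        (NH' (a * g * b⁻¹, a * L * a⁻¹)) (DH (a * g * b⁻¹, a * L * a⁻¹))
        (a * L * a⁻¹) =
      pb2 (NF (g, L)) (NF' (g, L)) (DF (g, L)) (NH (g, L)) (NH' (g, L)) (DH (g, L)) L := by
  have haa : a * aᵀ = 1 := mul_eq_one_comm.mp ha
  have hainv : a⁻¹ = aᵀ := Matrix.inv_eq_left_inv ha
  have hg' : IsUnit (a * g * b⁻¹).det := detUnit_conj ha hb hg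
  have c1F := C1 (g := g) (L := L) hF hFinv hNF hDF hg
  have c1H := C1 (g := g) (L := L) hH hHinv hNH hDH hg
  have c2F := C2 (g := g) (L := L) hFinv hNF' hg
  have c2H := C2 (g := g) (L := L) hHinv hNH' hg
  have c1F' := C1 (g := a * g * b⁻¹) (L := a * L * a⁻¹) hF hFinv hNF hDF hg'
  have c1H' := C1 (g := a * g * b⁻¹) (L := a * L * a⁻¹) hH hHinv hNH hDH hg'
  have c2F' := C2 (g := a * g * b⁻¹) (L := a * L * a⁻¹) hFinv hNF' hg'
  have c2H' := C2 (g := a * g * b⁻¹) (L := a * L * a⁻¹) hHinv hNH' hg'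
  have t1F := T1 (L := L) hFinv hNF ha hb hg
  have t2F := T2 (L := L) hFinv hDF ha hb hg
  have t1H := T1 (L := L) hHinv hNH ha hb hg
  have t2H := T2 (L := L) hHinv hDH ha hb hg
  rw [pb2_eq _ _ _ _ _ _ _ c1F' c1H' c2F' c2H', pb2_eq _ _ _ _ _ _ _ c1F c1H c2F c2H]
  rw [hainv] at t1F t2F t1H t2H ⊢
  rw [t1F, t2F, t1H, t2H]
  have conj_mul : ∀ X Y : gl n, (a * X * aᵀ) * (a * Y * aᵀ) = a * (X * Y) * aᵀ := by
    intro X Y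
    rw [show (a * X * aᵀ) * (a * Y * aᵀ) = a * X * (aᵀ * a) * Y * aᵀ by noncomm_ring, ha,
      mul_one]
    noncomm_ring
  have conj_sub : ∀ X Y : gl n, a * X * aᵀ - a * Y * aᵀ = a * (X - Y) * aᵀ := by
    intro X Y; noncomm_ring
  have conj_add : ∀ X Y : gl n, a * X * aᵀ + a * Y * aᵀ = a * (X + Y) * aᵀ := by
    intro X Y; noncomm_ring
  have conj_trForm : ∀ X Y : gl n, trForm (a * X * aᵀ) (a * Y * aᵀ) = trForm X Y := by
    intro X Y
    unfold trForm
    rw [conj_mul, Matrix.trace_mul_cycle, ha, one_mul]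
  simp only [conj_mul, conj_sub, conj_add, conj_trForm]
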